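/- Relation head of the ICL construction (β→∞ limit): Consider the relation head with weights W_KQ^rel = β Σ_{l=1}^L (Σ_{u∈U_l} E(u)) E([sep])^T and W_OV^rel = Σ_{l=1}^L (Σ_{u∈U_l} E(u))(Σ_{u∈U_l} E(u) + E(r_l))^T. For every ICL sequence X with shared attribute type l* and N demonstrations, as β→∞ the attention at the last position distributes uniformly over the N attribute positions, so that lim_{β→∞} g_rel(X) = (1/N) Σ_{i=1}^N E(a_{j_i}^{l*}) and lim_{β→∞} W_OV^rel g_rel(X) = Σ_{u∈U_{l*}} E(u), i.e., the head outputs the sum of all attribute values of the shared type l*. -/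

import Mathlib

open Filter Topology Finset Matrix

namespace CR

/-- Vocabulary tokens: `M` subjects, `L` attribute types each with `U` values,
`G` grammar tokens, `L` relation tokens, and a separator. -/
inductive Tok (M L U G : ℕ) : Type where
  | subj : Fin M → Tok M L U G
  | attr : Fin L → Fin U → Tok M L U G
  | gram : Fin G → Tok M L U G
  | rel  : Fin L → Tok M L U G
  | sep  : Tok M L U G
deriving DecidableEq, Fintype

/-- Embedding dimension: one coordinate per vocabulary token plus `P` positional coordinates. -/
abbrev Dim (M L U G P : ℕ) := Tok M L U G ⊕ Fin P

abbrev Vec (M L U G P : ℕ) := Dim M L U G P → ℝ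

variable {M L U G P : ℕ}

/-- One-hot token embedding `E(v)`. -/
def E (v : Tok M L U G) : Vec M L U G P :=
  fun i => if i = Sum.inl v then 1 else 0

/-- One-hot positional encoding for relative position `-k`
(`pos 0 = E(p₀)`, `pos 1 = E(p₋₁)`, ...); zero if `k ≥ P`. -/
def pos (k : ℕ) : Vec M L U G P :=
  fun i => match i with
  | Sum.inl _ => 0
  | Sum.inr j => if (j : ℕ) = k then 1 else 0

/-- Softmax attention weight of (0-indexed) row `j` among rows `0,…,t-1`, with query row `t-1`;
row `i` carries the relative positional encoding `p_{-(t-1-i)}`. -/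
noncomputable def attn (W : Matrix (Dim M L U G P) (Dim M L U G P) ℝ)
    (X : ℕ → Vec M L U G P) (t j : ℕ) : ℝ :=
  Real.exp ((X j + pos (t - 1 - j)) ⬝ᵥ W.mulVec (X (t - 1))) /
    ∑ i ∈ Finset.range t, Real.exp ((X i + pos (t - 1 - i)) ⬝ᵥ W.mulVec (X (t - 1)))

/-- Attention-head output `g_h^t(X)` (attention over the first `t` rows, query at row `t-1`). -/
noncomputable def gHead (W : Matrix (Dim M L U G P) (Dim M L U G P) ℝ)
    (X : ℕ → Vec M L U G P) (t : ℕ) : Vec M L U G P :=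
  ∑ j ∈ Finset.range t, attn W X t j • X j

/-- Token at (0-indexed) position `t` of a PT sequence with subject `jstar`:
block `k` occupies positions `k(S+3),…,k(S+3)+S+1` (subject, `S` middle tokens, separator),
followed (except after the last block) by the attribute `a_{jstar}^{ltype k}`. -/
def ptTok (S : ℕ) (jstar : Fin M) (ltype : ℕ → Fin L)
    (mid : ℕ → ℕ → Tok M L U G) (a : Fin M → Fin L → Fin U) (t : ℕ) : Tok M L U G :=
  let k := t / (S + 3)
  let r := t % (S + 3)
  if r = 0 then Tok.subj jstar
  else if r ≤ S then mid k (r - 1)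
  else if r = S + 1 then Tok.sep
  else Tok.attr (ltype k) (a jstar (ltype k))

/-- Token at (0-indexed) position `t` of an ICL sequence with shared attribute type `lstar`
and subjects `js 0, js 1, …`: the pattern is subject, separator, attribute, subject, … -/
def iclTok (a : Fin M → Fin L → Fin U) (js : ℕ → Fin M) (lstar : Fin L) (t : ℕ) :
    Tok M L U G :=
  if t % 3 = 0 then Tok.subj (js (t / 3))
  else if t % 3 = 1 then Tok.sep
  else Tok.attr lstar (a (js (t / 3)) lstar)



/-!
With the query at the final `[sep]`, the key–query matrix gives row `j` the score `β` exactly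
when row `j` holds an attribute token, and `0` otherwise (positional encodings are orthogonal to
the token embeddings). As `β → ∞` the softmax therefore becomes uniform attention over the `N`
attribute positions `3i + 2`, and the head outputs their average. The value–output matrix sends
every attribute of type `l*` to the sum of all type-`l*` attributes, so it maps that average to
this sum.
-/

lemma E_eq_single (v : Tok M L U G) : (E v : Vec M L U G P) = Pi.single (Sum.inl v) 1 := by
  ext i
  simp [E, Pi.single_apply]

lemma E_dotProduct (v : Tok M L U G) (w : Vec M L U G P) : E v ⬝ᵥ w = w (Sum.inl v) := by
  rw [E_eq_single, single_dotProduct, one_mul]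

lemma pos_dotProduct_E (k : ℕ) (v : Tok M L U G) : (pos k : Vec M L U G P) ⬝ᵥ E v = 0 := by
  rw [dotProduct_comm, E_dotProduct]
  rfl

lemma tendsto_softmax_indicator {ι : Type*} [DecidableEq ι] {s A : Finset ι} (hAs : A ⊆ s)
    (hA : A.Nonempty) (j : ι) :
    Tendsto (fun β : ℝ => Real.exp (if j ∈ A then β else 0) /
        ∑ i ∈ s, Real.exp (if i ∈ A then β else 0)) atTop
      (𝓝 (if j ∈ A then (#A : ℝ)⁻¹ else 0)) := by
  -- numerator and denominator are divided by `exp β`, so every term has a finite limit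
  have hshift : ∀ i, Tendsto (fun β : ℝ => Real.exp ((if i ∈ A then β else 0) - β)) atTop
      (𝓝 (if i ∈ A then 1 else 0)) := by
    intro i
    split_ifs
    · simp
    · simpa using Real.tendsto_exp_neg_atTop_nhds_zero
  have hcard : ∑ i ∈ s, (if i ∈ A then (1 : ℝ) else 0) = #A := by
    rw [sum_boole, filter_mem_eq_inter, inter_eq_right.2 hAs]
  have hlim := (hshift j).div (tendsto_finsetSum s fun i _ => hshift i)
    (by rw [hcard]; exact_mod_cast hA.card_pos.ne')
  rw [hcard] at hlim
  convert hlim using 2 with β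
  · simp only [Pi.div_apply, Real.exp_sub, ← sum_div]
    rw [div_div_div_cancel_right₀ (Real.exp_pos β).ne']
  · split_ifs <;> simp

lemma tendsto_gHead_of_score_eq_indicator (W : ℝ → Matrix (Dim M L U G P) (Dim M L U G P) ℝ)
    (X : ℕ → Vec M L U G P) {t : ℕ} {A : Finset ℕ} (hAt : A ⊆ range t) (hA : A.Nonempty)
    (hscore : ∀ β, ∀ j ∈ range t,
      (X j + pos (t - 1 - j)) ⬝ᵥ W β *ᵥ X (t - 1) = if j ∈ A then β else 0) :
    Tendsto (fun β => gHead (W β) X t) atTop (𝓝 ((#A : ℝ)⁻¹ • ∑ j ∈ A, X j)) := by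
  have hattn : ∀ β, ∀ j ∈ range t, attn (W β) X t j = Real.exp (if j ∈ A then β else 0) /
      ∑ i ∈ range t, Real.exp (if i ∈ A then β else 0) := by
    intro β j hj
    rw [attn, hscore β j hj, sum_congr rfl fun i hi => by rw [hscore β i hi]]
  have hmean : ∑ j ∈ range t, (if j ∈ A then (#A : ℝ)⁻¹ else 0) • X j =
      (#A : ℝ)⁻¹ • ∑ j ∈ A, X j := by
    simp only [ite_smul, zero_smul]
    rw [sum_ite_mem, inter_eq_right.2 hAt, smul_sum]
  rw [← hmean]
  refine tendsto_finsetSum _ fun j hj => ?_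
  exact ((tendsto_softmax_indicator hAt hA j).congr fun β => (hattn β j hj).symm).smul_const (X j)

section ICL

variable (a : Fin M → Fin L → Fin U) (js : ℕ → Fin M) (lstar : Fin L)

lemma iclTok_three_mul_add_one (i : ℕ) :
    (iclTok a js lstar (3 * i + 1) : Tok M L U G) = Tok.sep := by
  simp [iclTok]

lemma iclTok_three_mul_add_two (i : ℕ) :
    (iclTok a js lstar (3 * i + 2) : Tok M L U G) = Tok.attr lstar (a (js i) lstar) := by
  have hdiv : (3 * i + 2) / 3 = i := by omega
  simp [iclTok, hdiv]

lemma E_iclTok_dotProduct_sum_attr (j : ℕ) :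
    (E (iclTok a js lstar j) : Vec M L U G P) ⬝ᵥ ∑ l : Fin L, ∑ u : Fin U, E (Tok.attr l u) =
      if j % 3 = 2 then 1 else 0 := by
  unfold iclTok
  split_ifs <;> simp [E_dotProduct, E, ite_and] <;> omega

end ICL

def attrPositions (N : ℕ) : Finset ℕ := (range N).image (3 * · + 2)

lemma attrPositions_subset_range (N : ℕ) : attrPositions N ⊆ range (3 * N + 2) := by
  intro j
  simp only [attrPositions, mem_image, mem_range]
  omega

lemma card_attrPositions (N : ℕ) : #(attrPositions N) = N := by
  rw [attrPositions, card_image_of_injective _ (fun i j h => by simpa using h), card_range]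

lemma sum_attrPositions {A : Type*} [AddCommMonoid A] (N : ℕ) (f : ℕ → A) :
    ∑ j ∈ attrPositions N, f j = ∑ i ∈ range N, f (3 * i + 2) :=
  sum_image fun i _ j _ h => by simpa using h

lemma mem_attrPositions_iff {N j : ℕ} (hj : j < 3 * N + 2) : j ∈ attrPositions N ↔ j % 3 = 2 := by
  simp only [attrPositions, mem_image, mem_range]
  constructor
  · omega
  · intro h
    exact ⟨j / 3, by omega, by omega⟩

lemma smul_vecMulVec_E_sep_mulVec_E_sep (β : ℝ) (v : Vec M L U G P) :
    (β • vecMulVec v (E Tok.sep : Vec M L U G P)) *ᵥ E Tok.sep = β • v := by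
  rw [smul_mulVec, vecMulVec_mulVec, E_dotProduct]
  simp [E]

lemma sum_vecMulVec_attr_mulVec_E_attr (lstar : Fin L) (u₀ : Fin U) :
    (∑ l : Fin L, vecMulVec (∑ u : Fin U, E (Tok.attr l u))
        ((∑ u : Fin U, E (Tok.attr l u)) + E (Tok.rel l)) :
        Matrix (Dim M L U G P) (Dim M L U G P) ℝ) *ᵥ E (Tok.attr lstar u₀) =
      ∑ u : Fin U, (E (Tok.attr lstar u) : Vec M L U G P) := by
  simp only [sum_mulVec, vecMulVec_mulVec, dotProduct_comm _ (E _), E_dotProduct]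
  simp [E, ite_and]

theorem relation_head_ICL_limit_general
    (M L U G P N : ℕ) (hN : 0 < N) (T : ℕ) (hT : T = 3 * (N + 1) - 1)
    (a : Fin M → Fin L → Fin U) (lstar : Fin L) (js : ℕ → Fin M)
    (X : ℕ → Vec M L U G P) (hX : ∀ t, X t = E (iclTok a js lstar t))
    (WKQ0 WOV : Matrix (Dim M L U G P) (Dim M L U G P) ℝ)
    (hKQ : WKQ0 = Matrix.vecMulVec
      (∑ l : Fin L, ∑ u : Fin U, E (Tok.attr l u)) (E Tok.sep))
    (hOV : WOV = ∑ l : Fin L, Matrix.vecMulVec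
      (∑ u : Fin U, E (Tok.attr l u))
      ((∑ u : Fin U, E (Tok.attr l u)) + E (Tok.rel l))) :
    Filter.Tendsto (fun β : ℝ => gHead (β • WKQ0) X T) Filter.atTop
      (𝓝 ((N : ℝ)⁻¹ • ∑ i ∈ Finset.range N, E (Tok.attr lstar (a (js i) lstar)))) ∧
    Filter.Tendsto (fun β : ℝ => WOV.mulVec (gHead (β • WKQ0) X T)) Filter.atTop
      (𝓝 (∑ u : Fin U, E (Tok.attr lstar u))) := by
  obtain rfl : T = 3 * N + 2 := by omega
  have hscore : ∀ (β : ℝ), ∀ j ∈ range (3 * N + 2),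
      (X j + pos (3 * N + 2 - 1 - j)) ⬝ᵥ (β • WKQ0) *ᵥ X (3 * N + 2 - 1) =
        if j ∈ attrPositions N then β else 0 := by
    intro β j hj
    rw [hX, hX, hKQ, show 3 * N + 2 - 1 = 3 * N + 1 by omega, iclTok_three_mul_add_one,
      smul_vecMulVec_E_sep_mulVec_E_sep, dotProduct_smul, add_dotProduct,
      E_iclTok_dotProduct_sum_attr]
    simp [dotProduct_sum, pos_dotProduct_E, mem_attrPositions_iff (mem_range.1 hj)]
  have hgHead := tendsto_gHead_of_score_eq_indicator _ X (attrPositions_subset_range N)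
    (card_pos.1 (by rwa [card_attrPositions])) hscore
  simp only [card_attrPositions, sum_attrPositions, hX, iclTok_three_mul_add_two] at hgHead
  refine ⟨hgHead, ?_⟩
  refine ((continuous_const.matrix_mulVec continuous_id).tendsto' _ _ ?_).comp hgHead
  simp only [id, hOV, mulVec_smul, mulVec_sum, sum_vecMulVec_attr_mulVec_E_attr, sum_const,
    card_range, ← Nat.cast_smul_eq_nsmul ℝ, inv_smul_smul₀ (Nat.cast_ne_zero.2 hN.ne' : (N : ℝ) ≠ 0)]

/-- Relation head of the ICL construction (β→∞ limit). -/
theorem relation_head_ICL_limit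
    (M L U G P N : ℕ) (hN : 0 < N) (T : ℕ) (hT : T = 3 * (N + 1) - 1) (hP : T ≤ P)
    (a : Fin M → Fin L → Fin U) (lstar : Fin L) (js : ℕ → Fin M)
    (X : ℕ → Vec M L U G P) (hX : ∀ t, X t = E (iclTok a js lstar t))
    (WKQ0 WOV : Matrix (Dim M L U G P) (Dim M L U G P) ℝ)
    (hKQ : WKQ0 = Matrix.vecMulVec
      (∑ l : Fin L, ∑ u : Fin U, E (Tok.attr l u)) (E Tok.sep))
    (hOV : WOV = ∑ l : Fin L, Matrix.vecMulVec
      (∑ u : Fin U, E (Tok.attr l u))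
      ((∑ u : Fin U, E (Tok.attr l u)) + E (Tok.rel l))) :
    Filter.Tendsto (fun β : ℝ => gHead (β • WKQ0) X T) Filter.atTop
      (𝓝 ((N : ℝ)⁻¹ • ∑ i ∈ Finset.range N, E (Tok.attr lstar (a (js i) lstar)))) ∧
    Filter.Tendsto (fun β : ℝ => WOV.mulVec (gHead (β • WKQ0) X T)) Filter.atTop
      (𝓝 (∑ u : Fin U, E (Tok.attr lstar u))) :=
  relation_head_ICL_limit_general M L U G P N hN T hT a lstar js X hX WKQ0 WOV hKQ hOV

end CR
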